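/- arXiv:1903.07131 — 2 statements merged into one kernel-verified Lean document; each statement's English description precedes it below -/
import Mathlib

section
/- If Y0, Y1, Y2 are mutually independent Erlang random variables with unit-rate phases w0, w1, w2 ≥ 1 respectively, then for any t ≥ 0, P(Y0 + min{Y1, Y2} > t) = Σ_{n=0}^{w1-1} Σ_{m=0}^{w2-1} Σ_{l=0}^{n+m} [e^{-2t} t^l (-1)^{n+m-l} / (n! m! (w0-1)!)] · C(n+m, l) · ∫_0^t y^{n+m-l+w0-1} e^{y} dy + Σ_{n=0}^{w0-1} (t^n/n!) e^{-t}. -/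
open MeasureTheory ProbabilityTheory Real Finset

noncomputable def eTail (k : ℕ) (s : ℝ) : ℝ := exp (-s) * ∑ n ∈ range k, s ^ n / n.factorial

lemma eTail_nonneg (k : ℕ) {s : ℝ} (hs : 0 ≤ s) : 0 ≤ eTail k s := by
  apply mul_nonneg (exp_nonneg _)
  exact Finset.sum_nonneg fun n _ => div_nonneg (pow_nonneg hs n) (by positivity)

lemma eTail_le_one (k : ℕ) {s : ℝ} (hs : 0 ≤ s) : eTail k s ≤ 1 := by
  have h := Real.sum_le_exp_of_nonneg hs k
  calc exp (-s) * ∑ n ∈ range k, s ^ n / n.factorial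
      ≤ exp (-s) * exp s := by
        exact mul_le_mul_of_nonneg_left h (exp_nonneg _)
    _ = 1 := by rw [← Real.exp_add]; simp

lemma hasDerivAt_one_sub_eTail (j : ℕ) (u : ℝ) :
    HasDerivAt (fun u => 1 - eTail (j+1) u) (u ^ j / j.factorial * exp (-u)) u := by
  have hS : HasDerivAt (fun u : ℝ => ∑ n ∈ range (j+1), u ^ n / n.factorial)
      (∑ n ∈ range (j+1), (n : ℝ) * u ^ (n-1) / n.factorial) u := by
    apply HasDerivAt.fun_sum
    intro n _
    simpa [div_eq_mul_inv] using (hasDerivAt_pow n u).mul_const ((n.factorial : ℝ)⁻¹)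
  have hE : HasDerivAt (fun u : ℝ => exp (-u)) (-exp (-u)) u := by
    simpa using (hasDerivAt_neg u).exp
  have h := ((hE.mul hS).const_sub 1)
  have hsum : ∑ n ∈ range (j+1), (n : ℝ) * u ^ (n-1) / n.factorial
      = ∑ n ∈ range j, u ^ n / n.factorial := by
    rw [Finset.sum_range_succ']
    simp only [Nat.cast_zero, zero_mul, zero_div, add_zero]
    apply Finset.sum_congr rfl
    intro n _
    rw [Nat.add_sub_cancel, Nat.factorial_succ]
    push_cast
    have hn : (n.factorial : ℝ) ≠ 0 := by positivity
    field_simp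
  have hlast : ∑ n ∈ range (j+1), u ^ n / n.factorial
      = (∑ n ∈ range j, u ^ n / n.factorial) + u ^ j / j.factorial :=
    Finset.sum_range_succ _ _
  have hfun : (fun u => 1 - eTail (j+1) u)
      = fun x => 1 - rexp (-x) * ∑ n ∈ range (j + 1), x ^ n / n.factorial := by
    funext v; simp [eTail]
  rw [hfun]
  refine h.congr_deriv ?_
  rw [hsum, hlast]
  ring

lemma eTail_zero {k : ℕ} (hk : 1 ≤ k) : eTail k 0 = 1 := by
  rw [eTail, neg_zero, Real.exp_zero, one_mul]
  rw [Finset.sum_eq_single_of_mem 0 (Finset.mem_range.mpr hk)]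
  · simp
  · intro n _ hn
    simp [zero_pow hn]

lemma gammaPDF_nat_eq {k : ℕ} (hk : 1 ≤ k) {x : ℝ} (hx : 0 ≤ x) :
    gammaPDF (k : ℝ) 1 x = ENNReal.ofReal (x ^ (k-1) / (k-1).factorial * exp (-x)) := by
  rw [gammaPDF_of_nonneg hx]
  congr 1
  have h1 : ((k : ℝ)) = ((k - 1 : ℕ) : ℝ) + 1 := by
    exact_mod_cast (congrArg (Nat.cast : ℕ → ℝ) (Nat.succ_pred_eq_of_pos hk)).symm
  rw [Real.one_rpow, h1, Real.Gamma_nat_eq_factorial, add_sub_cancel_right, Real.rpow_natCast]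
  ring_nf

lemma gamma_Iic {k : ℕ} (hk : 1 ≤ k) {s : ℝ} (hs : 0 ≤ s) :
    gammaMeasure (k : ℝ) 1 (Set.Iic s) = ENNReal.ofReal (1 - eTail k s) := by
  rw [gammaMeasure, withDensity_apply _ measurableSet_Iic]
  have hsplit : Set.Iic s = Set.Iio 0 ∪ Set.Icc 0 s := by
    ext x; simp only [Set.mem_Iic, Set.mem_union, Set.mem_Iio, Set.mem_Icc]
    constructor
    · intro h; rcases lt_or_ge x 0 with h0 | h0
      · exact Or.inl h0
      · exact Or.inr ⟨h0, h⟩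
    · rintro (h | ⟨_, h⟩)
      · linarith
      · exact h
  rw [hsplit, lintegral_union measurableSet_Icc
    (by rw [Set.disjoint_left]; rintro x hx ⟨h0, _⟩; exact absurd h0 (not_le.mpr hx)),
    lintegral_gammaPDF_of_nonpos le_rfl, zero_add]
  have hcongr : ∫⁻ x in Set.Icc 0 s, gammaPDF (k : ℝ) 1 x
      = ∫⁻ x in Set.Icc 0 s, ENNReal.ofReal (x ^ (k-1) / (k-1).factorial * exp (-x)) := by
    apply setLIntegral_congr_fun measurableSet_Icc
    exact fun x hx => gammaPDF_nat_eq hk hx.1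
  rw [hcongr]
  have hcont : Continuous (fun x : ℝ => x ^ (k-1) / (k-1).factorial * exp (-x)) := by
    continuity
  have hint : IntegrableOn (fun x : ℝ => x ^ (k-1) / (k-1).factorial * exp (-x)) (Set.Icc 0 s) :=
    hcont.integrableOn_Icc
  rw [← ofReal_integral_eq_lintegral_ofReal hint
    (ae_restrict_of_forall_mem measurableSet_Icc fun x hx =>
      mul_nonneg (div_nonneg (pow_nonneg hx.1 _) (Nat.cast_nonneg _)) (exp_nonneg _))]
  congr 1
  rw [MeasureTheory.integral_Icc_eq_integral_Ioc, ← intervalIntegral.integral_of_le hs]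
  obtain ⟨j, rfl⟩ : ∃ j, k = j + 1 := ⟨k - 1, (Nat.succ_pred_eq_of_pos hk).symm⟩
  simp only [Nat.add_sub_cancel]
  rw [intervalIntegral.integral_eq_sub_of_hasDerivAt
    (fun u _ => hasDerivAt_one_sub_eTail j u)
    ((by continuity : Continuous fun u : ℝ => u ^ j / j.factorial * exp (-u)).intervalIntegrable 0 s)]
  rw [eTail_zero (by omega)]
  ring

lemma gamma_Ioi {k : ℕ} (hk : 1 ≤ k) {s : ℝ} (hs : 0 ≤ s) :
    gammaMeasure (k : ℝ) 1 (Set.Ioi s) = ENNReal.ofReal (eTail k s) := by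
  have : IsProbabilityMeasure (gammaMeasure (k : ℝ) 1) :=
    isProbabilityMeasure_gammaMeasure (by exact_mod_cast hk) one_pos
  have hc : Set.Ioi s = (Set.Iic s)ᶜ := (Set.compl_Iic).symm
  rw [hc, measure_compl measurableSet_Iic (measure_ne_top _ _), measure_univ, gamma_Iic hk hs,
    ← ENNReal.ofReal_one, ← ENNReal.ofReal_sub _ (by linarith [eTail_le_one k hs])]
  congr 1
  linarith

lemma gamma_Ioi_neg {k : ℕ} (hk : 1 ≤ k) {s : ℝ} (hs : s < 0) :
    gammaMeasure (k : ℝ) 1 (Set.Ioi s) = 1 := by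
  have : IsProbabilityMeasure (gammaMeasure (k : ℝ) 1) :=
    isProbabilityMeasure_gammaMeasure (by exact_mod_cast hk) one_pos
  have hIic : gammaMeasure (k : ℝ) 1 (Set.Iic s) = 0 := by
    have h1 : gammaMeasure (k : ℝ) 1 (Set.Iio 0) = 0 := by
      rw [gammaMeasure, withDensity_apply _ measurableSet_Iio]
      exact lintegral_gammaPDF_of_nonpos le_rfl
    exact le_antisymm (le_trans (measure_mono (fun x hx => lt_of_le_of_lt hx hs)) h1.le)
      (zero_le)
  have hc : Set.Ioi s = (Set.Iic s)ᶜ := (Set.compl_Iic).symm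
  rw [hc, measure_compl measurableSet_Iic (measure_ne_top _ _), measure_univ, hIic, tsub_zero]

lemma integrand_expand (w0 w1 w2 : ℕ) (hw0 : 1 ≤ w0) (t x : ℝ) :
    (x ^ (w0-1) / (w0-1).factorial * exp (-x)) * (eTail w1 (t-x) * eTail w2 (t-x))
    = ∑ n ∈ range w1, ∑ m ∈ range w2, ∑ l ∈ range (n + m + 1),
        (exp (-(2 * t)) * t ^ l * (-1 : ℝ) ^ (n + m - l) /
          ((n.factorial : ℝ) * (m.factorial : ℝ) * ((w0 - 1).factorial : ℝ)) *
          ((n + m).choose l : ℝ)) * (x ^ (n + m - l + w0 - 1) * exp x) := by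
  simp only [eTail]
  set K : ℝ := x ^ (w0-1) / (w0-1).factorial * exp (-x) * exp (-(t-x)) * exp (-(t-x)) with hK
  have step1 : (x ^ (w0-1) / (w0-1).factorial * exp (-x)) *
      ((exp (-(t-x)) * ∑ n ∈ range w1, (t-x) ^ n / n.factorial) *
       (exp (-(t-x)) * ∑ m ∈ range w2, (t-x) ^ m / m.factorial))
      = ∑ n ∈ range w1, ∑ m ∈ range w2, K * ((t-x) ^ n / n.factorial * ((t-x) ^ m / m.factorial)) := by
    rw [show (x ^ (w0-1) / (w0-1).factorial * exp (-x)) *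
      ((exp (-(t-x)) * ∑ n ∈ range w1, (t-x) ^ n / n.factorial) *
       (exp (-(t-x)) * ∑ m ∈ range w2, (t-x) ^ m / m.factorial))
      = K * ((∑ n ∈ range w1, (t-x) ^ n / n.factorial) * (∑ m ∈ range w2, (t-x) ^ m / m.factorial))
      from by rw [hK]; ring]
    rw [Finset.sum_mul_sum, Finset.mul_sum]
    exact Finset.sum_congr rfl fun n _ => Finset.mul_sum _ _ _
  rw [step1]
  refine Finset.sum_congr rfl fun n _ => Finset.sum_congr rfl fun m _ => ?_
  have hpm : (t-x) ^ n / n.factorial * ((t-x) ^ m / m.factorial)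
      = (t-x) ^ (n+m) / ((n.factorial : ℝ) * m.factorial) := by
    rw [pow_add]; ring
  rw [hpm, sub_pow, Finset.sum_div, Finset.mul_sum]
  refine Finset.sum_congr rfl fun l hl => ?_
  have hl' : l ≤ n + m := by
    have := Finset.mem_range.mp hl; omega
  have hsign : (-1 : ℝ) ^ (l + (n + m)) = (-1) ^ (n + m - l) := by
    rw [show l + (n+m) = (n+m-l) + 2*l from by omega, pow_add, pow_mul, neg_one_sq, one_pow,
      mul_one]
  have hpow : x ^ (w0-1) * x ^ (n+m-l) = x ^ (n+m-l+w0-1) := by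
    rw [← pow_add]; congr 1; omega
  have hexp : exp (-x) * (exp (-(t-x)) * exp (-(t-x))) = exp (-(2*t)) * exp x := by
    rw [← exp_add, ← exp_add, ← exp_add]; congr 1; ring
  rw [hK, hsign, ← hpow]
  linear_combination (x ^ (w0-1) * x ^ (n+m-l) * (-1:ℝ)^(n+m-l) * t ^ l * ((n+m).choose l : ℝ) /
    ((n.factorial : ℝ) * (m.factorial : ℝ) * ((w0-1).factorial : ℝ))) * hexp

lemma sum3_integral (w1 w2 : ℕ) (c : ℕ → ℕ → ℕ → ℝ) (e : ℕ → ℕ → ℕ → ℕ) (t : ℝ) :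
    (∫ x in (0:ℝ)..t, ∑ n ∈ range w1, ∑ m ∈ range w2, ∑ l ∈ range (n+m+1),
      c n m l * (x ^ e n m l * exp x))
    = ∑ n ∈ range w1, ∑ m ∈ range w2, ∑ l ∈ range (n+m+1),
        c n m l * ∫ y in (0:ℝ)..t, y ^ e n m l * exp y := by
  have hci : ∀ (c : ℝ) (e : ℕ), IntervalIntegrable (fun x : ℝ => c * (x ^ e * exp x))
      volume 0 t := fun c e =>
    (continuous_const.mul ((continuous_pow e).mul Real.continuous_exp)).intervalIntegrable 0 t
  have hc0 : ∀ n m l : ℕ, Continuous (fun x : ℝ => c n m l * (x ^ e n m l * exp x)) :=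
    fun n m l => continuous_const.mul ((continuous_pow _).mul Real.continuous_exp)
  have h2 : ∀ n m : ℕ, IntervalIntegrable
      (fun x => ∑ l ∈ range (n+m+1), c n m l * (x ^ e n m l * exp x)) volume 0 t := fun n m =>
    (continuous_finset_sum _ (fun l _ => hc0 n m l)).intervalIntegrable 0 t
  have h1 : ∀ n : ℕ, IntervalIntegrable
      (fun x => ∑ m ∈ range w2, ∑ l ∈ range (n+m+1), c n m l * (x ^ e n m l * exp x))
      volume 0 t := fun n =>
    (continuous_finset_sum _ (fun m _ =>
      continuous_finset_sum _ (fun l _ => hc0 n m l))).intervalIntegrable 0 t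
  refine (intervalIntegral.integral_finset_sum
    (f := fun n x => ∑ m ∈ range w2, ∑ l ∈ range (n+m+1), c n m l * (x ^ e n m l * exp x))
    (fun n _ => h1 n)).trans ?_
  refine Finset.sum_congr rfl fun n _ => ?_
  refine (intervalIntegral.integral_finset_sum
    (f := fun m x => ∑ l ∈ range (n+m+1), c n m l * (x ^ e n m l * exp x))
    (fun m _ => h2 n m)).trans ?_
  refine Finset.sum_congr rfl fun m _ => ?_
  refine (intervalIntegral.integral_finset_sum
    (f := fun l x => c n m l * (x ^ e n m l * exp x))
    (fun l _ => hci _ _)).trans ?_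
  refine Finset.sum_congr rfl fun l _ => ?_
  rw [intervalIntegral.integral_const_mul]

lemma key_integral (w0 w1 w2 : ℕ) (hw0 : 1 ≤ w0) (t : ℝ) :
    ∫ x in (0:ℝ)..t, (x ^ (w0-1) / (w0-1).factorial * exp (-x)) *
      (eTail w1 (t-x) * eTail w2 (t-x))
    = ∑ n ∈ range w1, ∑ m ∈ range w2, ∑ l ∈ range (n + m + 1),
        exp (-(2 * t)) * t ^ l * (-1 : ℝ) ^ (n + m - l) /
          ((n.factorial : ℝ) * (m.factorial : ℝ) * ((w0 - 1).factorial : ℝ)) *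
        ((n + m).choose l : ℝ) *
        ∫ y in (0 : ℝ)..t, y ^ (n + m - l + w0 - 1) * exp y := by
  rw [intervalIntegral.integral_congr
    (fun x _ => integrand_expand w0 w1 w2 hw0 t x)]
  exact sum3_integral w1 w2
    (fun n m l => exp (-(2 * t)) * t ^ l * (-1 : ℝ) ^ (n + m - l) /
        ((n.factorial : ℝ) * (m.factorial : ℝ) * ((w0 - 1).factorial : ℝ)) *
      ((n + m).choose l : ℝ))
    (fun n m l => n + m - l + w0 - 1) t

/-- If `Y0, Y1, Y2` are mutually independent Erlang random variables with unit-rate phases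
`w0, w1, w2 ≥ 1` respectively, then for any `t ≥ 0`,
`P(Y0 + min{Y1,Y2} > t)` equals the triple-sum formula of Proposition 1. -/
theorem erlang_sum_min_tail
    {Ω : Type*} [MeasurableSpace Ω] (P : Measure Ω) [IsProbabilityMeasure P]
    (Y0 Y1 Y2 : Ω → ℝ) (hm0 : Measurable Y0) (hm1 : Measurable Y1) (hm2 : Measurable Y2)
    (hindep : iIndepFun ![Y0, Y1, Y2] P)
    (w0 w1 w2 : ℕ) (hw0 : 1 ≤ w0) (hw1 : 1 ≤ w1) (hw2 : 1 ≤ w2)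
    (hmap0 : P.map Y0 = gammaMeasure w0 1)
    (hmap1 : P.map Y1 = gammaMeasure w1 1)
    (hmap2 : P.map Y2 = gammaMeasure w2 1) :
    ∀ t : ℝ, 0 ≤ t →
      (P {ω | Y0 ω + min (Y1 ω) (Y2 ω) > t}).toReal =
        (∑ n ∈ range w1, ∑ m ∈ range w2, ∑ l ∈ range (n + m + 1),
          exp (-(2 * t)) * t ^ l * (-1 : ℝ) ^ (n + m - l) /
            ((n.factorial : ℝ) * (m.factorial : ℝ) * ((w0 - 1).factorial : ℝ)) *
          ((n + m).choose l : ℝ) *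
          ∫ y in (0 : ℝ)..t, y ^ (n + m - l + w0 - 1) * exp y) +
        ∑ n ∈ range w0, t ^ n / (n.factorial : ℝ) * exp (-t) := by
  intro t ht
  set Z : Ω → ℝ := fun ω => min (Y1 ω) (Y2 ω) with hZdef
  have hmZ : Measurable Z := hm1.min hm2
  have hm : ∀ i, Measurable (![Y0, Y1, Y2] i) := by
    intro i; fin_cases i <;> simpa
  have h12 : IndepFun (fun ω => (Y1 ω, Y2 ω)) Y0 P := by
    have := hindep.indepFun_prodMk hm 1 2 0 (by decide) (by decide)
    simpa using this
  have hZ0 : IndepFun Y0 Z P :=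
    (h12.comp (measurable_fst.min measurable_snd) measurable_id).symm
  have h12' : IndepFun Y1 Y2 P := by
    have := hindep.indepFun (show (1 : Fin 3) ≠ 2 by decide)
    simpa using this
  have hZtail : ∀ s : ℝ, P.map Z (Set.Ioi s)
      = gammaMeasure (w1 : ℝ) 1 (Set.Ioi s) * gammaMeasure (w2 : ℝ) 1 (Set.Ioi s) := by
    intro s
    rw [Measure.map_apply hmZ measurableSet_Ioi, ← hmap1, ← hmap2,
      Measure.map_apply hm1 measurableSet_Ioi, Measure.map_apply hm2 measurableSet_Ioi]
    have hset : Z ⁻¹' Set.Ioi s = Y1 ⁻¹' Set.Ioi s ∩ Y2 ⁻¹' Set.Ioi s := by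
      ext ω
      simp [hZdef, Set.mem_preimage, lt_min_iff]
    rw [hset]
    exact h12'.measure_inter_preimage_eq_mul _ _ measurableSet_Ioi measurableSet_Ioi
  have hprodmap : P.map (fun ω => (Y0 ω, Z ω)) = (P.map Y0).prod (P.map Z) :=
    (indepFun_iff_map_prod_eq_prod_map_map hm0.aemeasurable hmZ.aemeasurable).mp hZ0
  have : IsProbabilityMeasure (P.map Z) := Measure.isProbabilityMeasure_map hmZ.aemeasurable
  have hsetm : MeasurableSet {p : ℝ × ℝ | t < p.1 + p.2} :=
    measurableSet_lt measurable_const (measurable_fst.add measurable_snd)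
  have hP1 : P {ω | Y0 ω + min (Y1 ω) (Y2 ω) > t}
      = ((P.map Y0).prod (P.map Z)) {p : ℝ × ℝ | t < p.1 + p.2} := by
    rw [← hprodmap, Measure.map_apply (hm0.prodMk hmZ) hsetm]
    rfl
  have hP2 : ((P.map Y0).prod (P.map Z)) {p : ℝ × ℝ | t < p.1 + p.2}
      = ∫⁻ x, (P.map Z) (Set.Ioi (t - x)) ∂(P.map Y0) := by
    rw [Measure.prod_apply hsetm]
    congr 1
    funext x
    congr 1
    ext y
    simp [Set.mem_Ioi, sub_lt_iff_lt_add']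
  have hmeasT : Measurable fun x : ℝ => (P.map Z) (Set.Ioi (t - x)) := by
    have ha : Antitone fun s : ℝ => (P.map Z) (Set.Ioi s) :=
      fun a b hab => measure_mono (Set.Ioi_subset_Ioi hab)
    exact ha.measurable.comp (measurable_const.sub measurable_id)
  have hpdfm : Measurable (gammaPDF (w0 : ℝ) 1) :=
    (measurable_gammaPDFReal _ _).ennreal_ofReal
  have hP3 : (∫⁻ x, (P.map Z) (Set.Ioi (t - x)) ∂(P.map Y0))
      = ∫⁻ x, gammaPDF (w0 : ℝ) 1 x * (P.map Z) (Set.Ioi (t - x)) ∂volume := by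
    rw [hmap0, gammaMeasure, lintegral_withDensity_eq_lintegral_mul _ hpdfm hmeasT]
    rfl
  have hTIoi : ∫⁻ x in Set.Ioi t, gammaPDF (w0 : ℝ) 1 x * (P.map Z) (Set.Ioi (t - x))
      = ENNReal.ofReal (eTail w0 t) := by
    have hcg : ∀ x ∈ Set.Ioi t,
        gammaPDF (w0 : ℝ) 1 x * (P.map Z) (Set.Ioi (t - x)) = gammaPDF (w0 : ℝ) 1 x := by
      intro x hx
      have hx' : t < x := hx
      rw [hZtail, gamma_Ioi_neg hw1 (by linarith), gamma_Ioi_neg hw2 (by linarith),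
        one_mul, mul_one]
    rw [setLIntegral_congr_fun measurableSet_Ioi hcg,
      ← withDensity_apply _ measurableSet_Ioi]
    exact gamma_Ioi hw0 ht
  have heTc : ∀ k : ℕ, Continuous (eTail k) := by
    intro k
    unfold eTail
    exact (Real.continuous_exp.comp continuous_neg).mul
      (continuous_finset_sum _ fun n _ => (continuous_pow n).div_const _)
  have hTIic : ∫⁻ x in Set.Iic t, gammaPDF (w0 : ℝ) 1 x * (P.map Z) (Set.Ioi (t - x))
      = ENNReal.ofReal (∫ x in Set.Icc 0 t,
          (x ^ (w0-1) / (w0-1).factorial * exp (-x)) * (eTail w1 (t-x) * eTail w2 (t-x))) := by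
    have hsplit : Set.Iic t = Set.Iio 0 ∪ Set.Icc 0 t := by
      ext x; simp only [Set.mem_Iic, Set.mem_union, Set.mem_Iio, Set.mem_Icc]
      constructor
      · intro h; rcases lt_or_ge x 0 with h0 | h0
        · exact Or.inl h0
        · exact Or.inr ⟨h0, h⟩
      · rintro (h | ⟨_, h⟩)
        · linarith
        · exact h
    rw [hsplit, lintegral_union measurableSet_Icc
      (by rw [Set.disjoint_left]; rintro x hx ⟨h0, _⟩; exact absurd h0 (not_le.mpr hx))]
    have hzero : ∫⁻ x in Set.Iio 0, gammaPDF (w0 : ℝ) 1 x * (P.map Z) (Set.Ioi (t - x)) = 0 := by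
      rw [setLIntegral_congr_fun measurableSet_Iio (fun x (hx : x < 0) => by
        rw [gammaPDF_of_neg hx, zero_mul])]
      simp
    rw [hzero, zero_add]
    have hcg : ∀ x ∈ Set.Icc 0 t,
        gammaPDF (w0 : ℝ) 1 x * (P.map Z) (Set.Ioi (t - x))
        = ENNReal.ofReal ((x ^ (w0-1) / (w0-1).factorial * exp (-x)) *
            (eTail w1 (t-x) * eTail w2 (t-x))) := by
      intro x hx
      have htx : 0 ≤ t - x := by linarith [hx.2]
      rw [hZtail, gamma_Ioi hw1 htx, gamma_Ioi hw2 htx, gammaPDF_nat_eq hw0 hx.1,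
        ← ENNReal.ofReal_mul (eTail_nonneg _ htx), ← ENNReal.ofReal_mul
          (mul_nonneg (div_nonneg (pow_nonneg hx.1 _) (Nat.cast_nonneg _)) (exp_nonneg _))]
    rw [setLIntegral_congr_fun measurableSet_Icc hcg]
    have hcont : Continuous fun x : ℝ =>
        (x ^ (w0-1) / (w0-1).factorial * exp (-x)) * (eTail w1 (t-x) * eTail w2 (t-x)) := by
      refine (((continuous_pow _).div_const _).mul
        (Real.continuous_exp.comp continuous_neg)).mul (Continuous.mul ?_ ?_) <;>
        exact (heTc _).comp (continuous_const.sub continuous_id)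
    rw [← ofReal_integral_eq_lintegral_ofReal (hcont.integrableOn_Icc)
      (ae_restrict_of_forall_mem measurableSet_Icc fun x hx => by
        have htx : 0 ≤ t - x := by linarith [hx.2]
        have h1 : (0:ℝ) ≤ x ^ (w0-1) / (w0-1).factorial * exp (-x) :=
          mul_nonneg (div_nonneg (pow_nonneg hx.1 _) (Nat.cast_nonneg _)) (exp_nonneg _)
        exact mul_nonneg h1 (mul_nonneg (eTail_nonneg _ htx) (eTail_nonneg _ htx)))]
  have hI0 : (0:ℝ) ≤ ∫ x in Set.Icc 0 t,
      (x ^ (w0-1) / (w0-1).factorial * exp (-x)) * (eTail w1 (t-x) * eTail w2 (t-x)) := by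
    refine setIntegral_nonneg measurableSet_Icc fun x hx => ?_
    have htx : 0 ≤ t - x := by linarith [hx.2]
    have h1 : (0:ℝ) ≤ x ^ (w0-1) / (w0-1).factorial * exp (-x) :=
          mul_nonneg (div_nonneg (pow_nonneg hx.1 _) (Nat.cast_nonneg _)) (exp_nonneg _)
    exact mul_nonneg h1 (mul_nonneg (eTail_nonneg _ htx) (eTail_nonneg _ htx))
  rw [hP1, hP2, hP3, ← lintegral_add_compl _ measurableSet_Iic, Set.compl_Iic, hTIic, hTIoi,
    ← ENNReal.ofReal_add hI0 (eTail_nonneg _ ht), ENNReal.toReal_ofReal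
      (add_nonneg hI0 (eTail_nonneg _ ht))]
  congr 1
  · rw [MeasureTheory.integral_Icc_eq_integral_Ioc, ← intervalIntegral.integral_of_le ht]
    exact key_integral w0 w1 w2 hw0 t
  · rw [eTail, mul_comm, Finset.sum_mul]
end

section
/- Let T1 and T2 be the travel times of two trucks whose routes share a common segment: T1 = Z + U1 and T2 = Z + U2, where Z, U1, U2 are mutually independent nonnegative random variables with Z ~ Er(1, w0), U1 ~ Er(1, w1), U2 ~ Er(1, w2). Let T1' = Z' + U1 and T2' = Z'' + U2 be the corresponding uncorrelated versions where Z', Z'' are i.i.d. copies of Z independent of everything else. Then for all t ≥ 0, P(min{T1, T2} > t) ≥ P(min{T1', T2'} > t). -/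
open MeasureTheory ProbabilityTheory Real Finset

open Set in
lemma surv_antitone' (ν : Measure ℝ) : Antitone (fun s => ν (Ioi s)) :=
  fun _ _ h => measure_mono (Ioi_subset_Ioi h)

open Set in
lemma surv_measurable' (ν : Measure ℝ) : Measurable (fun s => ν (Ioi s)) :=
  (surv_antitone' ν).measurable

open Set in
lemma key_surv_lemma {Ω : Type*} [MeasurableSpace Ω] {P : Measure Ω} [IsProbabilityMeasure P]
    {β : Type*} [MeasurableSpace β] (X : Ω → ℝ) (W : Ω → β)
    (hX : Measurable X) (hW : Measurable W) (h : IndepFun W X P)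
    (f : β → ℝ) (hf : Measurable f) :
    P {ω | X ω > f (W ω)} = ∫⁻ ω, (P.map X) (Ioi (f (W ω))) ∂P := by
  have hmap : P.map (fun ω => (W ω, X ω)) = (P.map W).prod (P.map X) :=
    (indepFun_iff_map_prod_eq_prod_map_map hW.aemeasurable hX.aemeasurable).mp h
  have hset : MeasurableSet {p : β × ℝ | f p.1 < p.2} :=
    measurableSet_lt (hf.comp measurable_fst) measurable_snd
  have h1 : P {ω | X ω > f (W ω)} = P.map (fun ω => (W ω, X ω)) {p | f p.1 < p.2} := by
    rw [Measure.map_apply (hW.prodMk hX) hset]; rfl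
  rw [h1, hmap, Measure.prod_apply hset]
  have h2 : ∀ b : β, (P.map X) (Prod.mk b ⁻¹' {p : β × ℝ | f p.1 < p.2}) =
      (P.map X) (Ioi (f b)) := fun b => rfl
  simp_rw [h2]
  exact lintegral_map ((surv_measurable' (P.map X)).comp hf) hW

/-- Let `T1 = Z + U1`, `T2 = Z + U2` be travel times sharing the common Erlang delay `Z`, and
`T1' = Z' + U1`, `T2' = Z'' + U2` their uncorrelated versions with `Z', Z''` i.i.d. copies of
`Z`, everything mutually independent, `Z ~ Er(1,w0)`, `U1 ~ Er(1,w1)`, `U2 ~ Er(1,w2)`.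
Then `P(min{T1,T2} > t) ≥ P(min{T1',T2'} > t)` for all `t ≥ 0`. -/
theorem correlated_min_stochastically_larger
    {Ω : Type*} [MeasurableSpace Ω] (P : Measure Ω) [IsProbabilityMeasure P]
    (Z Z' Z'' U1 U2 : Ω → ℝ)
    (hmZ : Measurable Z) (hmZ' : Measurable Z') (hmZ'' : Measurable Z'')
    (hmU1 : Measurable U1) (hmU2 : Measurable U2)
    (hindep : iIndepFun ![Z, Z', Z'', U1, U2] P)
    (w0 w1 w2 : ℕ) (hw0 : 1 ≤ w0) (hw1 : 1 ≤ w1) (hw2 : 1 ≤ w2)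
    (hZ : P.map Z = gammaMeasure w0 1)
    (hZ' : P.map Z' = gammaMeasure w0 1)
    (hZ'' : P.map Z'' = gammaMeasure w0 1)
    (hU1 : P.map U1 = gammaMeasure w1 1)
    (hU2 : P.map U2 = gammaMeasure w2 1) :
    ∀ t : ℝ, 0 ≤ t →
      P {ω | min (Z ω + U1 ω) (Z ω + U2 ω) > t} ≥
        P {ω | min (Z' ω + U1 ω) (Z'' ω + U2 ω) > t} := by
  intro t ht
  classical
  set G : ℝ → ENNReal := fun s => (P.map Z) (Set.Ioi s) with hG
  have hmvec : ∀ i, Measurable (![Z, Z', Z'', U1, U2] i) := by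
    intro i; fin_cases i <;> simpa using ‹_›
  -- G ≤ 1 and G antitone
  have hGprob : IsProbabilityMeasure (P.map Z) := Measure.isProbabilityMeasure_map hmZ.aemeasurable
  have hGle : ∀ s, G s ≤ 1 := fun s => prob_le_one
  have hGanti : Antitone G := surv_antitone' _
  -- survival functions of Z' and Z'' coincide with G
  have hZ'eq : P.map Z' = P.map Z := hZ'.trans hZ.symm
  have hZ''eq : P.map Z'' = P.map Z := hZ''.trans hZ.symm
  -- LHS
  have hWZ : IndepFun (fun ω => (U1 ω, U2 ω)) Z P :=
    hindep.indepFun_prodMk hmvec 3 4 0 (by decide) (by decide)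
  have hfL : Measurable (fun u : ℝ × ℝ => t - min u.1 u.2) :=
    measurable_const.sub (measurable_fst.min measurable_snd)
  have hLset : {ω | min (Z ω + U1 ω) (Z ω + U2 ω) > t} =
      {ω | Z ω > (fun u : ℝ × ℝ => t - min u.1 u.2) (U1 ω, U2 ω)} := by
    ext ω
    simp only [Set.mem_setOf_eq, gt_iff_lt, ← min_add_add_left, sub_lt_iff_lt_add]
  have hLHS : P {ω | min (Z ω + U1 ω) (Z ω + U2 ω) > t} =
      ∫⁻ ω, G (t - min (U1 ω) (U2 ω)) ∂P := by
    rw [hLset, key_surv_lemma Z (fun ω => (U1 ω, U2 ω)) hmZ (hmU1.prodMk hmU2) hWZ _ hfL]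
  -- RHS: split into product via independence of the pairs
  have hPP : IndepFun (fun ω => (Z' ω, U1 ω)) (fun ω => (Z'' ω, U2 ω)) P :=
    hindep.indepFun_prodMk_prodMk hmvec 1 3 2 4
      (by decide) (by decide) (by decide) (by decide)
  have hs : MeasurableSet {p : ℝ × ℝ | p.1 + p.2 > t} :=
    measurableSet_lt measurable_const (measurable_fst.add measurable_snd)
  have hRset : {ω | min (Z' ω + U1 ω) (Z'' ω + U2 ω) > t} =
      ((fun ω => (Z' ω, U1 ω)) ⁻¹' {p : ℝ × ℝ | p.1 + p.2 > t}) ∩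
      ((fun ω => (Z'' ω, U2 ω)) ⁻¹' {p : ℝ × ℝ | p.1 + p.2 > t}) := by
    ext ω
    simp [lt_min_iff, Set.mem_setOf_eq]
  have hRprod : P {ω | min (Z' ω + U1 ω) (Z'' ω + U2 ω) > t} =
      P {ω | Z' ω + U1 ω > t} * P {ω | Z'' ω + U2 ω > t} := by
    rw [hRset, hPP.measure_inter_preimage_eq_mul _ _ hs hs]; rfl
  -- each marginal probability as an integral of G
  have hfR : Measurable (fun u : ℝ => t - u) := measurable_const.sub measurable_id
  have hU1Z' : IndepFun U1 Z' P := hindep.indepFun (show (3 : Fin 5) ≠ 1 by decide)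
  have hU2Z'' : IndepFun U2 Z'' P := hindep.indepFun (show (4 : Fin 5) ≠ 2 by decide)
  have hA : P {ω | Z' ω + U1 ω > t} = ∫⁻ ω, G (t - U1 ω) ∂P := by
    have : {ω | Z' ω + U1 ω > t} = {ω | Z' ω > (fun u : ℝ => t - u) (U1 ω)} := by
      ext ω; simp only [Set.mem_setOf_eq, gt_iff_lt, sub_lt_iff_lt_add, add_comm]
    rw [this, key_surv_lemma Z' U1 hmZ' hmU1 hU1Z' _ hfR, hZ'eq]
  have hB : P {ω | Z'' ω + U2 ω > t} = ∫⁻ ω, G (t - U2 ω) ∂P := by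
    have : {ω | Z'' ω + U2 ω > t} = {ω | Z'' ω > (fun u : ℝ => t - u) (U2 ω)} := by
      ext ω; simp only [Set.mem_setOf_eq, gt_iff_lt, sub_lt_iff_lt_add, add_comm]
    rw [this, key_surv_lemma Z'' U2 hmZ'' hmU2 hU2Z'' _ hfR, hZ''eq]
  -- product of integrals as a single integral, by independence of U1, U2
  have hU12 : IndepFun U1 U2 P := hindep.indepFun (show (3 : Fin 5) ≠ 4 by decide)
  have hGU1 : Measurable (fun ω => G (t - U1 ω)) :=
    ((surv_measurable' (P.map Z)).comp hfR).comp hmU1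
  have hGU2 : Measurable (fun ω => G (t - U2 ω)) :=
    ((surv_measurable' (P.map Z)).comp hfR).comp hmU2
  have hGindep : IndepFun (fun ω => G (t - U1 ω)) (fun ω => G (t - U2 ω)) P :=
    hU12.comp ((surv_measurable' (P.map Z)).comp hfR) ((surv_measurable' (P.map Z)).comp hfR)
  have hmul : (∫⁻ ω, G (t - U1 ω) ∂P) * ∫⁻ ω, G (t - U2 ω) ∂P =
      ∫⁻ ω, G (t - U1 ω) * G (t - U2 ω) ∂P := by
    rw [← lintegral_mul_eq_lintegral_mul_lintegral_of_indepFun hGU1 hGU2 hGindep]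
    rfl
  -- pointwise comparison
  have hpt : ∀ ω, G (t - U1 ω) * G (t - U2 ω) ≤ G (t - min (U1 ω) (U2 ω)) := by
    intro ω
    rcases le_total (U1 ω) (U2 ω) with h | h
    · rw [min_eq_left h]
      calc G (t - U1 ω) * G (t - U2 ω) ≤ G (t - U1 ω) * 1 :=
            mul_le_mul_right (hGle _) _
        _ = G (t - U1 ω) := mul_one _
    · rw [min_eq_right h]
      calc G (t - U1 ω) * G (t - U2 ω) ≤ 1 * G (t - U2 ω) :=
            mul_le_mul_left (hGle _) _
        _ = G (t - U2 ω) := one_mul _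
  calc P {ω | min (Z' ω + U1 ω) (Z'' ω + U2 ω) > t}
      = ∫⁻ ω, G (t - U1 ω) * G (t - U2 ω) ∂P := by rw [hRprod, hA, hB, hmul]
    _ ≤ ∫⁻ ω, G (t - min (U1 ω) (U2 ω)) ∂P := lintegral_mono hpt
    _ = P {ω | min (Z ω + U1 ω) (Z ω + U2 ω) > t} := hLHS.symm
end
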